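/- If p(x) is a nontrivial polynomial set map of binomial type and a ∈ K, then p_S(x) = ∑_{σ ⊢ S} x(x − a·ℓ(σ))^{ℓ(σ)−1} ∏_{T ∈ σ} p'_T(a) for every finite nonempty S. -/

import Mathlib

open scoped Classical
open Polynomial

noncomputable section

/-- The set of set partitions of a finite set `S`. -/
def partitions {V : Type*} [DecidableEq V] (S : Finset V) :
    Finset (Finset (Finset V)) :=
  S.powerset.powerset.filter
    (fun P => (∀ T ∈ P, T ≠ ∅) ∧ P.sup id = S ∧
      ∀ T ∈ P, ∀ U ∈ P, T ≠ U → Disjoint T U)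

/-- A polynomial set map is of binomial type if
`p_S(x+y) = ∑_{T ⊎ U = S} p_T(x) p_U(y)`. -/
def BinomialType {V K : Type*} [DecidableEq V] [Field K] [CharZero K]
    (p : Finset V → Polynomial K) : Prop :=
  ∀ S : Finset V, ∀ x y : K,
    (p S).eval (x + y) = ∑ T ∈ S.powerset, (p T).eval x * (p (S \ T)).eval y

/-!
As functions of `S`, both `p_S` and the right-hand side `q_S` satisfy
`q'_S(X) = ∑_{∅ ≠ T ⊆ S} p'_T(a) q_{S \ T}(X - a)`: for `p` this is the binomial identity
differentiated at `X = a`; for the Abel side it follows from `A'_{n+1}(X) = (n + 1) A_n(X - a)`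
and the bijection `(P, T ∈ P) ↦ (T, P \ {T})` between partitions of `S` with a marked block and
blocks `T` together with a partition of `S \ T`. Both families equal `1` at `S = ∅` and vanish at
`0` otherwise, so they agree by strong induction on `S`, since in characteristic zero a
polynomial is determined by its derivative and its constant term.
-/

open Finset

section Partitions

variable {V : Type*} [DecidableEq V] {S T : Finset V} {P : Finset (Finset V)}

lemma mem_partitions :
    P ∈ partitions S ↔ (∀ T ∈ P, T ⊆ S) ∧ (∀ T ∈ P, T ≠ ∅) ∧ P.sup id = S ∧
      ∀ T ∈ P, ∀ U ∈ P, T ≠ U → Disjoint T U := by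
  simp only [partitions, mem_filter, subset_iff (s₁ := P), mem_powerset]

lemma partitions_empty : partitions (∅ : Finset V) = {∅} := by
  ext P
  simp only [mem_partitions, subset_empty, mem_singleton]
  constructor
  · rintro ⟨hsub, hne, -, -⟩
    exact eq_empty_of_forall_notMem fun T hT => hne T hT (hsub T hT)
  · rintro rfl
    simp

lemma nonempty_of_mem_partitions (hS : S ≠ ∅) (hP : P ∈ partitions S) : P.Nonempty := by
  rw [nonempty_iff_ne_empty]
  rintro rfl
  exact hS (mem_partitions.mp hP).2.2.1.symm

lemma erase_mem_partitions (hP : P ∈ partitions S) (hT : T ∈ P) :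
    P.erase T ∈ partitions (S \ T) := by
  obtain ⟨hsub, hne, hsup, hdisj⟩ := mem_partitions.mp hP
  have hsub' : ∀ U ∈ P.erase T, U ⊆ S \ T := fun U hU =>
    subset_sdiff.mpr ⟨hsub U (mem_of_mem_erase hU),
      hdisj U (mem_of_mem_erase hU) T hT (ne_of_mem_erase hU)⟩
  refine mem_partitions.mpr ⟨hsub', fun U hU => hne U (mem_of_mem_erase hU), ?_,
    fun U hU W hW => hdisj U (mem_of_mem_erase hU) W (mem_of_mem_erase hW)⟩
  refine (Finset.sup_le hsub').antisymm fun x hx => ?_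
  obtain ⟨hxS, hxT⟩ := mem_sdiff.mp hx
  obtain ⟨U, hU, hxU⟩ := mem_sup.mp (hsup ▸ hxS : x ∈ P.sup id)
  exact mem_sup.mpr ⟨U, mem_erase.mpr ⟨fun h => hxT (h ▸ hxU), hU⟩, hxU⟩

lemma notMem_of_mem_partitions_sdiff (hT : T ≠ ∅) (hP : P ∈ partitions (S \ T)) : T ∉ P :=
  fun hTP => hT (disjoint_self.mp (subset_sdiff.mp ((mem_partitions.mp hP).1 T hTP)).2)

lemma insert_mem_partitions (hT : T ≠ ∅) (hTS : T ⊆ S) (hP : P ∈ partitions (S \ T)) :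
    insert T P ∈ partitions S := by
  obtain ⟨hsub, hne, hsup, hdisj⟩ := mem_partitions.mp hP
  have hdisjT : ∀ U ∈ P, Disjoint T U := fun U hU =>
    disjoint_of_subset_right (hsub U hU) disjoint_sdiff
  refine mem_partitions.mpr ⟨?_, ?_, ?_, ?_⟩
  · simpa [hTS] using fun U hU => (hsub U hU).trans sdiff_subset
  · simpa [hT] using hne
  · rw [sup_insert, hsup]
    exact union_sdiff_of_subset hTS
  · simp only [mem_insert]
    rintro U (rfl | hU) W (rfl | hW) hUW
    exacts [absurd rfl hUW, hdisjT W hW, (hdisjT U hU).symm, hdisj U hU W hW hUW]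

lemma sum_partitions_sum_erase {M : Type*} [AddCommMonoid M] (S : Finset V)
    (f : Finset V → Finset (Finset V) → M) :
    ∑ P ∈ partitions S, ∑ T ∈ P, f T (P.erase T) =
      ∑ T ∈ S.powerset.erase ∅, ∑ Q ∈ partitions (S \ T), f T Q := by
  rw [sum_sigma', sum_sigma']
  refine sum_bij' (fun x _ => ⟨x.2, x.1.erase x.2⟩) (fun y _ => ⟨insert y.1 y.2, y.1⟩)
    ?_ ?_ ?_ ?_ fun _ _ => rfl
  · rintro ⟨P, T⟩ h
    obtain ⟨hP, hT⟩ := mem_sigma.mp h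
    obtain ⟨hsub, hne, -⟩ := mem_partitions.mp hP
    simp only [mem_sigma, mem_erase, mem_powerset]
    exact ⟨⟨hne T hT, hsub T hT⟩, erase_mem_partitions hP hT⟩
  · rintro ⟨T, Q⟩ h
    simp only [mem_sigma, mem_erase, mem_powerset] at h
    obtain ⟨⟨hT, hTS⟩, hQ⟩ := h
    exact mem_sigma.mpr ⟨insert_mem_partitions hT hTS hQ, mem_insert_self T Q⟩
  · rintro ⟨P, T⟩ h
    simp [insert_erase (mem_sigma.mp h).2]
  · rintro ⟨T, Q⟩ h
    simp only [mem_sigma, mem_erase] at h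
    simp [erase_insert (notMem_of_mem_partitions_sdiff h.1.1 h.2)]

end Partitions

section Abel

variable {K : Type*} [CommRing K] (a : K)

/-- `X (X - a n)^(n - 1)` for `n ≥ 1`, but `1` (not `X`) for `n = 0`. -/
def abelPoly : ℕ → K[X]
  | 0 => 1
  | n + 1 => X * (X - C (a * (n + 1 : ℕ))) ^ n

lemma abelPoly_of_ne_zero {n : ℕ} (hn : n ≠ 0) :
    abelPoly a n = X * (X - C (a * n)) ^ (n - 1) := by
  obtain ⟨m, rfl⟩ := Nat.exists_eq_add_one_of_ne_zero hn
  rfl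

lemma eval_zero_abelPoly_succ (n : ℕ) : (abelPoly a (n + 1)).eval 0 = 0 := by
  simp [abelPoly]

lemma derivative_abelPoly_succ (n : ℕ) :
    derivative (abelPoly a (n + 1)) = (n + 1 : K[X]) * (abelPoly a n).comp (X - C a) := by
  cases n with
  | zero => simp [abelPoly]
  | succ m =>
    simp only [abelPoly, C_mul, map_natCast, derivative_mul, derivative_X, derivative_pow,
      derivative_sub, derivative_natCast, derivative_C, mul_comp, X_comp,
      pow_comp, sub_comp, C_comp, natCast_comp]
    push_cast
    ring

lemma derivative_C_prod_mul_abelPoly_card {ι : Type*} [DecidableEq ι] (c : ι → K)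
    (P : Finset ι) :
    derivative (C (∏ i ∈ P, c i) * abelPoly a #P) =
      ∑ i ∈ P,
        C (c i) * (C (∏ j ∈ P.erase i, c j) * abelPoly a #(P.erase i)).comp (X - C a) := by
  rcases P.eq_empty_or_nonempty with rfl | hP
  · simp [abelPoly]
  obtain ⟨m, hm⟩ := Nat.exists_eq_add_one_of_ne_zero hP.card_pos.ne'
  have hterm : ∀ i ∈ P, C (c i) * (C (∏ j ∈ P.erase i, c j) * abelPoly a #(P.erase i)).comp
      (X - C a) = C (∏ i ∈ P, c i) * (abelPoly a m).comp (X - C a) := fun i hi => by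
    rw [mul_comp, C_comp, card_erase_of_mem hi, hm, Nat.add_sub_cancel, ← mul_assoc, ← C_mul,
      mul_prod_erase P c hi]
  rw [sum_congr rfl hterm, sum_const, hm, nsmul_eq_mul, derivative_C_mul,
    derivative_abelPoly_succ]
  push_cast
  ring

end Abel

section Expansion

variable {V K : Type*} [DecidableEq V] [CommRing K]

def abelExpansion (c : Finset V → K) (a : K) (S : Finset V) : K[X] :=
  ∑ P ∈ partitions S, C (∏ T ∈ P, c T) * abelPoly a #P

variable (c : Finset V → K) (a : K)

lemma abelExpansion_empty : abelExpansion c a ∅ = 1 := by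
  simp [abelExpansion, partitions_empty, abelPoly]

lemma eval_zero_abelExpansion {S : Finset V} (hS : S ≠ ∅) :
    (abelExpansion c a S).eval 0 = 0 := by
  refine (eval_finsetSum _ _ _).trans (sum_eq_zero fun P hP => ?_)
  obtain ⟨m, hm⟩ :=
    Nat.exists_eq_add_one_of_ne_zero (nonempty_of_mem_partitions hS hP).card_pos.ne'
  rw [eval_mul, hm, eval_zero_abelPoly_succ, mul_zero]

lemma derivative_abelExpansion (S : Finset V) :
    derivative (abelExpansion c a S) =
      ∑ T ∈ S.powerset.erase ∅, C (c T) * (abelExpansion c a (S \ T)).comp (X - C a) := by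
  simp only [abelExpansion, map_sum, derivative_C_prod_mul_abelPoly_card, Polynomial.sum_comp,
    mul_sum]
  exact sum_partitions_sum_erase S
    fun T Q => C (c T) * (C (∏ U ∈ Q, c U) * abelPoly a #Q).comp (X - C a)

end Expansion

theorem eq_of_derivative_eq_sum_comp {V K : Type*} [DecidableEq V] [CommRing K]
    [IsAddTorsionFree K] {q r : Finset V → K[X]} (c : Finset V → K) (a : K)
    (hq : ∀ S, derivative (q S) =
      ∑ T ∈ S.powerset.erase ∅, C (c T) * (q (S \ T)).comp (X - C a))
    (hr : ∀ S, derivative (r S) =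
      ∑ T ∈ S.powerset.erase ∅, C (c T) * (r (S \ T)).comp (X - C a))
    (h_empty : q ∅ = r ∅) (h_zero : ∀ S ≠ ∅, (q S).eval 0 = (r S).eval 0) : q = r := by
  funext S
  induction S using Finset.strongInduction with
  | H S ih =>
    rcases eq_or_ne S ∅ with rfl | hS
    · exact h_empty
    have hder : derivative (q S - r S) = 0 := by
      rw [derivative_sub, hq, hr, ← sum_sub_distrib]
      refine sum_eq_zero fun T hT => ?_
      obtain ⟨hT, hTS⟩ := mem_erase.mp hT
      rw [ih (S \ T) (sdiff_ssubset (mem_powerset.mp hTS) (nonempty_iff_ne_empty.mpr hT)),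
        sub_self]
    rw [← sub_eq_zero, eq_C_of_derivative_eq_zero hder, coeff_zero_eq_eval_zero, eval_sub,
      h_zero S hS, sub_self, C_0]

namespace BinomialType

variable {V K : Type*} [DecidableEq V] [Field K] [CharZero K] {p : Finset V → K[X]}

lemma eval_zero (hp : BinomialType p) (hp1 : p ∅ = 1) {S : Finset V} (hS : S ≠ ∅) :
    (p S).eval 0 = 0 := by
  induction S using Finset.strongInduction with
  | H S ih =>
    have h := hp S 0 0
    rw [add_zero, sum_eq_add_of_mem ∅ S (empty_mem_powerset S) (mem_powerset_self S) hS.symm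
      fun T hT hT' => ?_] at h
    · simp only [hp1, sdiff_empty, sdiff_self, bot_eq_empty, eval_one, one_mul, mul_one] at h
      linear_combination -h
    · rw [ih T (ssubset_of_subset_of_ne (mem_powerset.mp hT) hT'.2) hT'.1, zero_mul]

lemma comp_X_add_C (hp : BinomialType p) (S : Finset V) (y : K) :
    (p S).comp (X + C y) = ∑ T ∈ S.powerset, p T * C ((p (S \ T)).eval y) :=
  Polynomial.funext fun x => by
    simp only [eval_comp, eval_add, eval_X, eval_C, eval_finsetSum, eval_mul, hp S x y]

/-- Differentiate `p_S(X + y) = ∑ p_T(X) p_{S \ T}(y)` at `X = a` and put `y = z - a`. -/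
lemma derivative_eq (hp : BinomialType p) (hp1 : p ∅ = 1) (a : K) (S : Finset V) :
    derivative (p S) =
      ∑ T ∈ S.powerset.erase ∅,
        C ((derivative (p T)).eval a) * (p (S \ T)).comp (X - C a) := by
  rw [sum_erase _ (by simp [hp1])]
  refine Polynomial.funext fun z => ?_
  have h := congrArg (fun q => (derivative q).eval a) (hp.comp_X_add_C S (z - a))
  simp only [derivative_comp, derivative_add, derivative_X, derivative_C, add_zero, one_mul,
    eval_comp, eval_add, eval_X, eval_C, add_sub_cancel, map_sum, derivative_mul, mul_zero,
    eval_finsetSum, eval_mul] at h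
  simp only [h, eval_finsetSum, eval_mul, eval_C, eval_comp, eval_sub, eval_X]

end BinomialType

/-- Abel-type expansion:
`p_S(x) = ∑_{σ ⊢ S} x(x − a·ℓ(σ))^{ℓ(σ)−1} ∏_{T ∈ σ} p'_T(a)`. -/
theorem binomialType_abel_expansion {V K : Type*} [DecidableEq V] [Field K]
    [CharZero K] (p : Finset V → Polynomial K) (hp : BinomialType p)
    (hp1 : p ∅ = 1) (a : K) :
    ∀ S : Finset V, S ≠ ∅ →
      p S = ∑ P ∈ partitions S,
        Polynomial.C (∏ T ∈ P, (Polynomial.derivative (p T)).eval a) *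
          (X * (X - Polynomial.C (a * P.card)) ^ (P.card - 1)) := by
  intro S hS
  set c : Finset V → K := fun T => (derivative (p T)).eval a
  have hp_eq : p = abelExpansion c a :=
    eq_of_derivative_eq_sum_comp c a (hp.derivative_eq hp1 a) (derivative_abelExpansion c a)
      (by rw [hp1, abelExpansion_empty])
      fun S hS => by rw [hp.eval_zero hp1 hS, eval_zero_abelExpansion c a hS]
  calc p S = abelExpansion c a S := congrFun hp_eq S
    _ = _ := sum_congr rfl fun P hP => by
      rw [abelPoly_of_ne_zero a (nonempty_of_mem_partitions hS hP).card_pos.ne']
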